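/- arXiv:2503.01749 — 4 statements merged into one kernel-verified Lean document; each statement's English description precedes it below -/
import Mathlib

section
/- Let R be a commutative ring, t, n ∈ R, K := R[X]/(X² − tX + n) with ϑ the image of X, ϑ̄ := t − ϑ, and assume δ := ϑ − ϑ̄ is a unit of K. Let M ∈ M₂(K) be the matrix with rows (t, −n) and (1, 0), let ι : K → M₂(K) be the R-algebra homomorphism with ι(ϑ) = M, let 𝓜 ∈ M₂(K) be the matrix with rows (ϑ̄, ϑ) and (1, 1) (invertible since det 𝓜 = −δ), and let j : K ⊗_R K → M₂(K) be the R-algebra homomorphism determined by j(x ⊗ y) = y · (𝓜⁻¹ · ι(x) · 𝓜) (well defined since scalar matrices are central). Then, with e := (1⊗ϑ − ϑ⊗1)·(1⊗δ)⁻¹ and ē := (ϑ⊗1 − 1⊗ϑ̄)·(1⊗δ)⁻¹, one has j(e) = the matrix with rows (1, 0) and (0, 0), and j(ē) = the matrix with rows (0, 0) and (0, 1). -/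
open Polynomial Matrix
open scoped TensorProduct

/-- For `K = R[X]/(X² - tX + n)` (realized as any `R`-algebra isomorphic to
`AdjoinRoot (X² - tX + n)`) with `ϑ` the image of `X`, `ϑ̄ = t - ϑ`, `δ = ϑ - ϑ̄` a unit,
`ι : K → M₂(K)` the `R`-algebra map sending `ϑ` to the companion matrix `M`,
`𝓜 = (ϑ̄, ϑ; 1, 1)`, and `j : K ⊗[R] K → M₂(K)` the `R`-algebra map with
`j(x ⊗ y) = y·(𝓜⁻¹ ι(x) 𝓜)`, the idempotents `e` and `ē` realize as the elementary
idempotent matrices `E₁₁` and `E₂₂`. -/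
theorem idempotents_realize_as_elementary_matrices
    (R K : Type*) [CommRing R] [CommRing K] [Algebra R K] (t n : R)
    (φ : AdjoinRoot (X ^ 2 - C t * X + C n : R[X]) ≃ₐ[R] K)
    (ϑ ϑbar δ : K)
    (hϑ : ϑ = φ (AdjoinRoot.root (X ^ 2 - C t * X + C n : R[X])))
    (hϑbar : ϑbar = algebraMap R K t - ϑ)
    (hδ : δ = ϑ - ϑbar) (hu : IsUnit δ)
    (M 𝓜 : Matrix (Fin 2) (Fin 2) K)
    (hM : M = !![algebraMap R K t, -(algebraMap R K n); 1, 0])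
    (h𝓜 : 𝓜 = !![ϑbar, ϑ; 1, 1])
    (ι : K →ₐ[R] Matrix (Fin 2) (Fin 2) K) (hι : ι ϑ = M)
    (j : K ⊗[R] K →ₐ[R] Matrix (Fin 2) (Fin 2) K)
    (hj : ∀ x y : K, j (x ⊗ₜ[R] y) = y • (𝓜⁻¹ * ι x * 𝓜))
    (e ebar : K ⊗[R] K)
    (he : e = ((1 : K) ⊗ₜ[R] ϑ - ϑ ⊗ₜ[R] (1 : K)) * Ring.inverse ((1 : K) ⊗ₜ[R] δ))
    (hebar : ebar = (ϑ ⊗ₜ[R] (1 : K) - (1 : K) ⊗ₜ[R] ϑbar) * Ring.inverse ((1 : K) ⊗ₜ[R] δ)) :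
    j e = !![1, 0; 0, 0] ∧ j ebar = !![0, 0; 0, 1] := by
  subst hδ
  set T := algebraMap R K t with hT
  set N := algebraMap R K n with hN
  -- the quadratic relation satisfied by ϑ
  have hquad : ϑ * ϑ = T * ϑ - N := by
    have h0 : Polynomial.aeval (AdjoinRoot.root (X ^ 2 - C t * X + C n : R[X]))
        (X ^ 2 - C t * X + C n : R[X]) = 0 := by
      rw [AdjoinRoot.aeval_eq, AdjoinRoot.mk_self]
    have h1 := congrArg φ h0
    simp only [map_add, map_sub, _root_.map_mul, map_pow, aeval_X, aeval_C, map_zero,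
      AlgEquiv.commutes] at h1
    rw [hϑ, hT, hN]
    linear_combination h1
  -- 𝓜 is invertible
  have hdet : IsUnit 𝓜.det := by
    rw [h𝓜, Matrix.det_fin_two_of]
    have h3 : ϑbar * 1 - ϑ * 1 = -(ϑ - ϑbar) := by ring
    rw [h3]
    exact hu.neg
  -- conjugation diagonalizes M
  have hMmul : 𝓜⁻¹ * M * 𝓜 = !![ϑbar, 0; 0, ϑ] := by
    have h2 : M * 𝓜 = 𝓜 * !![ϑbar, 0; 0, ϑ] := by
      rw [hM, h𝓜]
      ext i k
      fin_cases i <;> fin_cases k <;>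
        simp [Matrix.mul_apply, Fin.sum_univ_two, hϑbar] <;>
        first
          | linear_combination hquad
          | linear_combination -hquad
          | ring1
    rw [Matrix.mul_assoc, h2, ← Matrix.mul_assoc, Matrix.nonsing_inv_mul _ hdet, Matrix.one_mul]
  -- values of j on simple tensors
  have hjL : j (ϑ ⊗ₜ[R] (1 : K)) = !![ϑbar, 0; 0, ϑ] := by
    rw [hj, hι, one_smul, hMmul]
  have hjR : ∀ y : K, j ((1 : K) ⊗ₜ[R] y) = y • (1 : Matrix (Fin 2) (Fin 2) K) := by
    intro y
    rw [hj, _root_.map_one, Matrix.mul_one, Matrix.nonsing_inv_mul _ hdet]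
  -- the unit 1 ⊗ δ
  obtain ⟨u, hu'⟩ := hu
  have hvin : ((1:K) ⊗ₜ[R] (ϑ - ϑbar)) * ((1:K) ⊗ₜ[R] (↑u⁻¹ : K)) = 1 := by
    rw [Algebra.TensorProduct.tmul_mul_tmul, one_mul, ← hu', Units.mul_inv]
    rfl
  have hvin' : ((1:K) ⊗ₜ[R] (↑u⁻¹ : K)) * ((1:K) ⊗ₜ[R] (ϑ - ϑbar)) = 1 := by
    rw [Algebra.TensorProduct.tmul_mul_tmul, one_mul, ← hu', Units.inv_mul]
    rfl
  set v : (K ⊗[R] K)ˣ := ⟨(1:K) ⊗ₜ[R] (ϑ - ϑbar), (1:K) ⊗ₜ[R] (↑u⁻¹ : K), hvin, hvin'⟩ with hv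
  have hinv : Ring.inverse ((1:K) ⊗ₜ[R] (ϑ - ϑbar)) = (1:K) ⊗ₜ[R] (↑u⁻¹ : K) := by
    have h4 : ((1:K) ⊗ₜ[R] (ϑ - ϑbar)) = (v : K ⊗[R] K) := rfl
    rw [h4, Ring.inverse_unit]
    rfl
  have huinv : (↑u⁻¹ : K) * (ϑ - ϑbar) = 1 := by
    rw [← hu']; exact u.inv_mul
  constructor
  · rw [he, hinv, _root_.map_mul, map_sub, hjL, hjR ϑ, hjR (↑u⁻¹ : K)]
    ext i k
    fin_cases i <;> fin_cases k <;>
      simp [Matrix.mul_apply, Fin.sum_univ_two, Matrix.smul_apply, Matrix.one_apply] <;>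
      first
        | linear_combination huinv
        | linear_combination -huinv
        | ring1
        | linear_combination hu'
        | linear_combination -hu'
  · rw [hebar, hinv, _root_.map_mul, map_sub, hjL, hjR ϑbar, hjR (↑u⁻¹ : K)]
    ext i k
    fin_cases i <;> fin_cases k <;>
      simp [Matrix.mul_apply, Fin.sum_univ_two, Matrix.smul_apply, Matrix.one_apply] <;>
      first
        | linear_combination huinv
        | linear_combination -huinv
        | ring1
        | linear_combination hu'
        | linear_combination -hu'
end

section
/- Let p be a prime, t, n ∈ ℤ_p, ϑ ∈ ℤ_p with ϑ² = t·ϑ − n, ϑ̄ := t − ϑ, and assume δ := ϑ − ϑ̄ is a unit of ℤ_p. Fix s ∈ ℕ and, viewing all elements in ℚ_p, let M be the 2×2 matrix over ℚ_p with rows (t, −n) and (1, 0), and set ξ := δ⁻¹ · P · T where P has rows (ϑ, ϑ̄), (1, 1) and T has rows (p^s, 1), (0, 1). Then for all a, b ∈ ℚ_p: every entry of ξ⁻¹ · (a·1 + b·M) · ξ lies in ℤ_p if and only if a ∈ ℤ_p and b ∈ p^s·ℤ_p. -/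
/-!
The columns `(ϑ, 1)` and `(ϑ̄, 1)` are eigenvectors of the companion matrix `M`, with eigenvalues
`ϑ` and `ϑ̄`. Hence conjugating `a + bM` by `ξ` gives the upper triangular matrix with diagonal
`a + bϑ`, `a + bϑ̄` and corner `bδ/pˢ`: the shear `(pˢ, 1; 0, 1)` creates the corner and the scalar
`δ⁻¹` cancels. As `δ` is a unit, the corner is integral iff `b ∈ pˢℤ_p`, and then the diagonal
entries are integral iff `a` is.
-/

open Matrix

theorem companion_mul_eigenbasis {R : Type*} [CommRing R] {t n ϑ ϑbar : R}
    (hϑ : ϑ ^ 2 = t * ϑ - n) (hϑbar : ϑbar = t - ϑ) :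
    !![t, -n; 1, 0] * !![ϑ, ϑbar; 1, 1] = !![ϑ, ϑbar; 1, 1] * !![ϑ, 0; 0, ϑbar] := by
  subst hϑbar
  ext i j
  fin_cases i <;> fin_cases j <;> simp <;> linear_combination -hϑ

theorem smul_one_add_smul_companion_mul_eigenbasis {R : Type*} [CommRing R] {t n ϑ ϑbar : R}
    (hϑ : ϑ ^ 2 = t * ϑ - n) (hϑbar : ϑbar = t - ϑ) (a b : R) :
    (a • 1 + b • !![t, -n; 1, 0]) * !![ϑ, ϑbar; 1, 1] =
      !![ϑ, ϑbar; 1, 1] * !![a + b * ϑ, 0; 0, a + b * ϑbar] := by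
  have hD : !![a + b * ϑ, 0; 0, a + b * ϑbar] = a • 1 + b • !![ϑ, 0; 0, ϑbar] := by
    ext i j; fin_cases i <;> fin_cases j <;> simp
  rw [hD, Matrix.add_mul, Matrix.mul_add, smul_mul, smul_mul, Matrix.mul_smul, Matrix.mul_smul,
    Matrix.one_mul, Matrix.mul_one, companion_mul_eigenbasis hϑ hϑbar]

theorem diagonal_mul_shear {K : Type*} [Field K] (x y : K) {q : K} (hq : q ≠ 0) :
    !![x, 0; 0, y] * !![q, 1; 0, 1] = !![q, 1; 0, 1] * !![x, (x - y) / q; 0, y] := by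
  ext i j; fin_cases i <;> fin_cases j <;> simp <;> field_simp; ring

theorem conj_smul_one_add_smul_companion {K : Type*} [Field K] {t n ϑ ϑbar q c : K}
    (hϑ : ϑ ^ 2 = t * ϑ - n) (hϑbar : ϑbar = t - ϑ) (hδ : ϑ - ϑbar ≠ 0) (hq : q ≠ 0)
    (hc : c ≠ 0) (a b : K) :
    (c • (!![ϑ, ϑbar; 1, 1] * !![q, 1; 0, 1]))⁻¹ * (a • 1 + b • !![t, -n; 1, 0]) *
        (c • (!![ϑ, ϑbar; 1, 1] * !![q, 1; 0, 1])) =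
      !![a + b * ϑ, b * (ϑ - ϑbar) / q; 0, a + b * ϑbar] := by
  set ξ := c • (!![ϑ, ϑbar; 1, 1] * !![q, 1; 0, 1])
  set U := !![a + b * ϑ, b * (ϑ - ϑbar) / q; 0, a + b * ϑbar]
  have hdet : IsUnit ξ.det := by
    rw [isUnit_iff_ne_zero, det_smul, det_mul, det_fin_two_of, det_fin_two_of]
    simp [hc, hq, hδ]
  have hshear := diagonal_mul_shear (a + b * ϑ) (a + b * ϑbar) hq
  rw [show a + b * ϑ - (a + b * ϑbar) = b * (ϑ - ϑbar) by ring] at hshear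
  have hconj : (a • 1 + b • !![t, -n; 1, 0]) * ξ = ξ * U := by
    rw [Matrix.mul_smul, smul_mul, ← Matrix.mul_assoc,
      smul_one_add_smul_companion_mul_eigenbasis hϑ hϑbar, Matrix.mul_assoc, hshear,
      Matrix.mul_assoc]
  rw [Matrix.mul_assoc, hconj, nonsing_inv_mul_cancel_left _ _ hdet]

section Ultrametric

variable {K : Type*} [NormedField K]

theorem norm_mul_div_le_one_iff {b δ q : K} (hδ : ‖δ‖ = 1) (hq : q ≠ 0) :
    ‖b * δ / q‖ ≤ 1 ↔ ‖b‖ ≤ ‖q‖ := by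
  rw [norm_div, norm_mul, hδ, mul_one, div_le_one (norm_pos_iff.2 hq)]

variable [IsUltrametricDist K]

theorem norm_add_mul_le_one_iff {a b z : K} (hb : ‖b‖ ≤ 1) (hz : ‖z‖ ≤ 1) :
    ‖a + b * z‖ ≤ 1 ↔ ‖a‖ ≤ 1 := by
  have hbz : ‖b * z‖ ≤ 1 := by rw [norm_mul]; exact mul_le_one₀ hb (norm_nonneg _) hz
  constructor
  · intro h
    simpa using (IsUltrametricDist.norm_add_le_max (a + b * z) (-(b * z))).trans
      (max_le h (by rwa [norm_neg]))
  · intro h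
    exact (IsUltrametricDist.norm_add_le_max _ _).trans (max_le h hbz)

theorem forall_norm_upperTriangular_le_one_iff {a b ϑ ϑbar δ q : K} (hϑ : ‖ϑ‖ ≤ 1)
    (hϑbar : ‖ϑbar‖ ≤ 1) (hδ : ‖δ‖ = 1) (hq : ‖q‖ ≤ 1) (hq0 : q ≠ 0) :
    (∀ i j, ‖!![a + b * ϑ, b * δ / q; 0, a + b * ϑbar] i j‖ ≤ 1) ↔ ‖a‖ ≤ 1 ∧ ‖b‖ ≤ ‖q‖ := by
  simp only [Fin.forall_fin_two, of_apply, cons_val_zero, cons_val_one, norm_zero, zero_le_one,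
    true_and, norm_mul_div_le_one_iff hδ hq0]
  constructor
  · rintro ⟨⟨h00, hb⟩, -⟩
    exact ⟨(norm_add_mul_le_one_iff (hb.trans hq) hϑ).1 h00, hb⟩
  · rintro ⟨ha, hb⟩
    exact ⟨⟨(norm_add_mul_le_one_iff (hb.trans hq) hϑ).2 ha, hb⟩,
      (norm_add_mul_le_one_iff (hb.trans hq) hϑbar).2 ha⟩

end Ultrametric

/-- Let `ϑ ∈ ℤ_p` satisfy `ϑ² = tϑ - n` with `δ = ϑ - ϑ̄` a unit of `ℤ_p`
(where `ϑ̄ = t - ϑ`), and let `ξ = δ⁻¹·(ϑ, ϑ̄; 1, 1)·(pˢ, 1; 0, 1)` over `ℚ_p`. Then all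
entries of `ξ⁻¹(a·1 + b·M)ξ` are `p`-adic integers iff `a ∈ ℤ_p` and `b ∈ pˢℤ_p`
(membership expressed via the `p`-adic norm). -/
theorem optimal_embedding_split (p : ℕ) [Fact p.Prime] (t n ϑ ϑbar δ : ℤ_[p])
    (hϑ : ϑ ^ 2 = t * ϑ - n) (hϑbar : ϑbar = t - ϑ) (hδ : δ = ϑ - ϑbar)
    (hδu : IsUnit δ) (s : ℕ)
    (M ξ : Matrix (Fin 2) (Fin 2) ℚ_[p])
    (hM : M = !![(t : ℚ_[p]), -(n : ℚ_[p]); 1, 0])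
    (hξ : ξ = ((δ : ℚ_[p]))⁻¹ •
      (!![(ϑ : ℚ_[p]), (ϑbar : ℚ_[p]); 1, 1] * !![((p : ℚ_[p])) ^ s, 1; 0, 1])) :
    ∀ a b : ℚ_[p],
      (∀ i j : Fin 2,
          ‖(ξ⁻¹ * (a • (1 : Matrix (Fin 2) (Fin 2) ℚ_[p]) + b • M) * ξ) i j‖ ≤ 1) ↔
        (‖a‖ ≤ 1 ∧ ‖b‖ ≤ ‖((p : ℚ_[p])) ^ s‖) := by
  intro a b
  have hq : (p : ℚ_[p]) ^ s ≠ 0 := pow_ne_zero _ (Nat.cast_ne_zero.2 (Fact.out : p.Prime).ne_zero)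
  have hδ' : (δ : ℚ_[p]) = ϑ - ϑbar := by rw [hδ, PadicInt.coe_sub]
  have hδ0 : (δ : ℚ_[p]) ≠ 0 := by rw [Ne, PadicInt.coe_eq_zero]; exact hδu.ne_zero
  rw [hξ, hM, conj_smul_one_add_smul_companion
    (by rw [← PadicInt.coe_pow, hϑ, PadicInt.coe_sub, PadicInt.coe_mul])
    (by rw [hϑbar, PadicInt.coe_sub]) (hδ' ▸ hδ0) hq (inv_ne_zero hδ0), ← hδ']
  refine forall_norm_upperTriangular_le_one_iff ?_ ?_ ?_ ?_ hq
  · rw [PadicInt.padic_norm_e_of_padicInt]; exact ϑ.norm_le_one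
  · rw [PadicInt.padic_norm_e_of_padicInt]; exact ϑbar.norm_le_one
  · rw [PadicInt.padic_norm_e_of_padicInt]; exact PadicInt.isUnit_iff.1 hδu
  · rw [norm_pow]; exact pow_le_one₀ (norm_nonneg _) Padic.norm_p_lt_one.le
end

section
/- Let p be a prime, t, n ∈ ℤ_p, and s, s′ ∈ ℕ with s′ ≤ 2s. Viewing all elements in ℚ_p, let M be the 2×2 matrix over ℚ_p with rows (t, −n) and (1, 0), and let ξ be the matrix with rows (0, −1) and (p^s, 0). Then for all a, b ∈ ℚ_p, writing C := ξ⁻¹ · (a·1 + b·M) · ξ, the following are equivalent: (i) every entry of C lies in ℤ_p and the (2,1)-entry of C lies in p^{s′}·ℤ_p; (ii) a ∈ ℤ_p and b ∈ p^s·ℤ_p. -/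
/-!
Conjugating by `ξ = !![0, -1; c, 0]` turns `a + bM` into `!![a, -b/c; bnc, a + bt]`. The
`(1, 2)`-entry forces `‖b‖ ≤ ‖c‖`; conversely, once `‖a‖ ≤ 1` and `‖b‖ ≤ ‖c‖`, the
ultrametric inequality bounds the diagonal and `‖bnc‖ ≤ ‖c‖²`, which is at most `‖p^{s'}‖`
since `s' ≤ 2s`.
-/

open Matrix

section Conjugation

variable {K : Type*} [Field K]

theorem Matrix.inv_antidiag_neg_one (c : K) (hc : c ≠ 0) :
    (!![0, -1; c, 0] : Matrix (Fin 2) (Fin 2) K)⁻¹ = !![0, c⁻¹; -1, 0] := by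
  apply Matrix.inv_eq_right_inv
  rw [Matrix.mul_fin_two, Matrix.one_fin_two]
  simp [hc]

theorem Matrix.conj_antidiag_companion (c a b t n : K) (hc : c ≠ 0) :
    (!![0, -1; c, 0] : Matrix (Fin 2) (Fin 2) K)⁻¹ *
        (a • (1 : Matrix (Fin 2) (Fin 2) K) + b • !![t, -n; 1, 0]) * !![0, -1; c, 0] =
      !![a, -(b * c⁻¹); b * n * c, a + b * t] := by
  rw [Matrix.inv_antidiag_neg_one c hc, Matrix.one_fin_two]
  ext i j
  fin_cases i <;> fin_cases j <;> simp [Matrix.mul_apply, Fin.sum_univ_two] <;> field_simp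

end Conjugation

section Normed

variable {K : Type*} [NormedField K]

theorem norm_le_of_conj_integral {a b c t n : K} (hc : c ≠ 0)
    (hC : ∀ i j : Fin 2, ‖(!![a, -(b * c⁻¹); b * n * c, a + b * t] : Matrix _ _ K) i j‖ ≤ 1) :
    ‖a‖ ≤ 1 ∧ ‖b‖ ≤ ‖c‖ := by
  have ha : ‖a‖ ≤ 1 := by simpa using hC 0 0
  have hbc : ‖b‖ / ‖c‖ ≤ 1 := by simpa [div_eq_mul_inv] using hC 0 1
  exact ⟨ha, (div_le_one (norm_pos_iff.mpr hc)).mp hbc⟩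

variable [IsUltrametricDist K]

theorem conj_integral_of_norm_le {a b c t n : K} (hc1 : ‖c‖ ≤ 1) (ht : ‖t‖ ≤ 1)
    (hn : ‖n‖ ≤ 1) (ha : ‖a‖ ≤ 1) (hb : ‖b‖ ≤ ‖c‖) :
    (∀ i j : Fin 2, ‖(!![a, -(b * c⁻¹); b * n * c, a + b * t] : Matrix _ _ K) i j‖ ≤ 1) ∧
      ‖b * n * c‖ ≤ ‖c‖ * ‖c‖ := by
  have hbnc : ‖b * n * c‖ ≤ ‖c‖ * ‖c‖ := by
    rw [norm_mul, norm_mul]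
    gcongr
    simpa using mul_le_mul hb hn (norm_nonneg n) (norm_nonneg c)
  have hbc : ‖b * c⁻¹‖ ≤ 1 := by
    rw [norm_mul, norm_inv]
    exact mul_inv_le_one_of_le₀ hb (norm_nonneg c)
  have hdiag : ‖a + b * t‖ ≤ 1 := by
    refine (IsUltrametricDist.norm_add_le_max a (b * t)).trans (max_le ha ?_)
    rw [norm_mul]
    exact mul_le_one₀ (hb.trans hc1) (norm_nonneg t) ht
  refine ⟨?_, hbnc⟩
  simp only [Fin.forall_fin_two, of_apply, cons_val', cons_val_zero, cons_val_one,
    empty_val', cons_val_fin_one, norm_neg]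
  exact ⟨⟨ha, hbc⟩, ⟨hbnc.trans (mul_le_one₀ hc1 (norm_nonneg c) hc1), hdiag⟩⟩

theorem conj_integral_iff {a b c t n : K} {r : ℝ} (hc : c ≠ 0) (hc1 : ‖c‖ ≤ 1)
    (hcr : ‖c‖ * ‖c‖ ≤ r) (ht : ‖t‖ ≤ 1) (hn : ‖n‖ ≤ 1) :
    ((∀ i j : Fin 2, ‖(!![a, -(b * c⁻¹); b * n * c, a + b * t] : Matrix _ _ K) i j‖ ≤ 1) ∧
      ‖(!![a, -(b * c⁻¹); b * n * c, a + b * t] : Matrix _ _ K) 1 0‖ ≤ r) ↔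
      ‖a‖ ≤ 1 ∧ ‖b‖ ≤ ‖c‖ := by
  refine ⟨fun h ↦ norm_le_of_conj_integral hc h.1, fun ⟨ha, hb⟩ ↦ ?_⟩
  obtain ⟨hC, hbnc⟩ := conj_integral_of_norm_le hc1 ht hn ha hb
  exact ⟨hC, by simpa using hbnc.trans hcr⟩

end Normed

theorem Padic.norm_p_pow_le_one (p : ℕ) [Fact p.Prime] (s : ℕ) : ‖(p : ℚ_[p]) ^ s‖ ≤ 1 := by
  rw [norm_pow]
  exact pow_le_one₀ (norm_nonneg _) Padic.norm_p_lt_one.le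

theorem Padic.norm_p_pow_mul_self_le {p : ℕ} [Fact p.Prime] {s s' : ℕ} (hs : s' ≤ 2 * s) :
    ‖(p : ℚ_[p]) ^ s‖ * ‖(p : ℚ_[p]) ^ s‖ ≤ ‖(p : ℚ_[p]) ^ s'‖ := by
  rw [← norm_mul, ← pow_add, norm_pow, norm_pow]
  exact pow_le_pow_of_le_one (norm_nonneg _) Padic.norm_p_lt_one.le (by omega)

/-- Let `s' ≤ 2s`, `M` the companion matrix of `X² - tX + n` over `ℚ_p`
(with `t, n ∈ ℤ_p`), and `ξ = (0, -1; pˢ, 0)`. For `C = ξ⁻¹(a·1 + b·M)ξ`, all entries of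
`C` are `p`-adic integers with `(2,1)`-entry in `p^{s'}ℤ_p` iff `a ∈ ℤ_p` and `b ∈ pˢℤ_p`
(membership expressed via the `p`-adic norm). -/
theorem optimal_embedding_nonsplit (p : ℕ) [Fact p.Prime] (t n : ℤ_[p]) (s s' : ℕ)
    (hs : s' ≤ 2 * s)
    (M ξ : Matrix (Fin 2) (Fin 2) ℚ_[p])
    (hM : M = !![(t : ℚ_[p]), -(n : ℚ_[p]); 1, 0])
    (hξ : ξ = !![0, -1; ((p : ℚ_[p])) ^ s, 0]) :
    ∀ a b : ℚ_[p],
      ((∀ i j : Fin 2,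
          ‖(ξ⁻¹ * (a • (1 : Matrix (Fin 2) (Fin 2) ℚ_[p]) + b • M) * ξ) i j‖ ≤ 1) ∧
        ‖(ξ⁻¹ * (a • (1 : Matrix (Fin 2) (Fin 2) ℚ_[p]) + b • M) * ξ) 1 0‖ ≤
          ‖((p : ℚ_[p])) ^ s'‖) ↔
      (‖a‖ ≤ 1 ∧ ‖b‖ ≤ ‖((p : ℚ_[p])) ^ s‖) := by
  intro a b
  have hps : (p : ℚ_[p]) ^ s ≠ 0 :=
    pow_ne_zero _ (Nat.cast_ne_zero.mpr (Fact.out : p.Prime).ne_zero)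
  have hnorm (z : ℤ_[p]) : ‖(z : ℚ_[p])‖ ≤ 1 := by
    rw [PadicInt.padic_norm_e_of_padicInt]
    exact z.norm_le_one
  rw [hM, hξ, Matrix.conj_antidiag_companion _ _ _ _ _ hps]
  exact conj_integral_iff hps (Padic.norm_p_pow_le_one p s) (Padic.norm_p_pow_mul_self_le hs)
    (hnorm t) (hnorm n)
end

section
/- Let p be a prime, t, n ∈ ℤ_p, ϑ ∈ ℤ_p with ϑ² = t·ϑ − n, ϑ̄ := t − ϑ, and N ∈ ℕ. Viewing all elements in ℚ_p, let M be the 2×2 matrix over ℚ_p with rows (t, −n) and (1, 0), and set ξ := B · T, where B has rows (ϑ, −1), (1, 0) and T has rows (p^N, 0), (0, 1). Then ξ is invertible (det ξ = p^N) and, for all a, b ∈ ℚ_p: (i) ξ⁻¹ · (a·1 + b·M) · ξ equals the matrix with rows (a + bϑ, −p^{−N}·b) and (0, a + bϑ̄); (ii) every entry of this matrix lies in ℤ_p if and only if a ∈ ℤ_p and b ∈ p^N·ℤ_p. -/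
open Matrix

/-- Let `ϑ ∈ ℤ_p` satisfy `ϑ² = tϑ - n`, `ϑ̄ = t - ϑ`, and set
`ξ = (ϑ, -1; 1, 0)·(p^N, 0; 0, 1)` over `ℚ_p`. Then `ξ` is invertible with `det ξ = p^N`,
conjugation by `ξ` sends `a·1 + b·M` to `(a + bϑ, -p^{-N}b; 0, a + bϑ̄)`, and all entries of
this matrix are `p`-adic integers iff `a ∈ ℤ_p` and `b ∈ p^Nℤ_p` (membership expressed via
the `p`-adic norm). -/
theorem conjugation_p_component_split (p : ℕ) [Fact p.Prime] (t n ϑ ϑbar : ℤ_[p])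
    (hϑ : ϑ ^ 2 = t * ϑ - n) (hϑbar : ϑbar = t - ϑ) (N : ℕ)
    (M ξ : Matrix (Fin 2) (Fin 2) ℚ_[p])
    (hM : M = !![(t : ℚ_[p]), -(n : ℚ_[p]); 1, 0])
    (hξ : ξ = !![(ϑ : ℚ_[p]), -1; 1, 0] * !![((p : ℚ_[p])) ^ N, 0; 0, 1]) :
    IsUnit ξ ∧ ξ.det = ((p : ℚ_[p])) ^ N ∧
    ∀ a b : ℚ_[p],
      ξ⁻¹ * (a • (1 : Matrix (Fin 2) (Fin 2) ℚ_[p]) + b • M) * ξ =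
        !![a + b * (ϑ : ℚ_[p]), -((((p : ℚ_[p])) ^ N)⁻¹ * b); 0, a + b * (ϑbar : ℚ_[p])] ∧
      ((∀ i j : Fin 2,
          ‖(ξ⁻¹ * (a • (1 : Matrix (Fin 2) (Fin 2) ℚ_[p]) + b • M) * ξ) i j‖ ≤ 1) ↔
        (‖a‖ ≤ 1 ∧ ‖b‖ ≤ ‖((p : ℚ_[p])) ^ N‖)) := by
  have hp0 : (p : ℚ_[p]) ≠ 0 := by
    exact_mod_cast (Fact.out (p := p.Prime)).ne_zero
  have hpN : ((p : ℚ_[p])) ^ N ≠ 0 := pow_ne_zero _ hp0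
  have hnorm : ‖((p : ℚ_[p])) ^ N‖ = (((p : ℝ)) ^ N)⁻¹ := by
    rw [norm_pow, Padic.norm_p, inv_pow]
  have hppos : (0 : ℝ) < ((p : ℝ)) ^ N := by
    have : (0:ℝ) < (p:ℝ) := by exact_mod_cast (Fact.out (p := p.Prime)).pos
    positivity
  have hdet : ξ.det = ((p : ℚ_[p])) ^ N := by
    rw [hξ, Matrix.det_mul, Matrix.det_fin_two_of, Matrix.det_fin_two_of]
    ring
  have hunit : IsUnit ξ := by
    rw [Matrix.isUnit_iff_isUnit_det, hdet]
    exact (isUnit_iff_ne_zero).mpr hpN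
  refine ⟨hunit, hdet, fun a b => ?_⟩
  have hϑq : (ϑ : ℚ_[p]) ^ 2 = (t : ℚ_[p]) * ϑ - n := by
    have := congrArg (fun x : ℤ_[p] => (x : ℚ_[p])) hϑ
    push_cast at this; exact this
  have hbq : (ϑbar : ℚ_[p]) = (t : ℚ_[p]) - ϑ := by
    have := congrArg (fun x : ℤ_[p] => (x : ℚ_[p])) hϑbar
    push_cast at this; exact this
  set D : Matrix (Fin 2) (Fin 2) ℚ_[p] :=
    !![a + b * (ϑ : ℚ_[p]), -((((p : ℚ_[p])) ^ N)⁻¹ * b); 0, a + b * (ϑbar : ℚ_[p])] with hD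
  have key : (a • (1 : Matrix (Fin 2) (Fin 2) ℚ_[p]) + b • M) * ξ = ξ * D := by
    subst hM hξ
    ext i j
    fin_cases i <;> fin_cases j <;>
      simp [hD, Matrix.mul_apply, Fin.sum_univ_two, hbq, Matrix.one_apply]
    · linear_combination (-(b * ((p : ℚ_[p])) ^ N)) * hϑq
    · field_simp
      ring
    · ring
    · rw [← mul_assoc, mul_inv_cancel₀ hpN, one_mul]
  have hconj : ξ⁻¹ * (a • (1 : Matrix (Fin 2) (Fin 2) ℚ_[p]) + b • M) * ξ = D := by
    rw [Matrix.mul_assoc, key, ← Matrix.mul_assoc,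
      Matrix.nonsing_inv_mul ξ (by rw [hdet]; exact isUnit_iff_ne_zero.mpr hpN), Matrix.one_mul]
  refine ⟨hconj, ?_⟩
  rw [hconj]
  have hpN1 : ‖((p : ℚ_[p])) ^ N‖ ≤ 1 := by
    rw [hnorm]
    exact inv_le_one_of_one_le₀ (one_le_pow₀ (by exact_mod_cast (Fact.out (p := p.Prime)).one_le))
  constructor
  · intro h
    have h01 := h 0 1
    have h00 := h 0 0
    simp [hD] at h01 h00
    have hb : ‖b‖ ≤ ‖((p : ℚ_[p])) ^ N‖ := by
      rw [hnorm]
      calc ‖b‖ = (((p : ℝ)) ^ N)⁻¹ * (((p : ℝ)) ^ N * ‖b‖) := by field_simp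
        _ ≤ (((p : ℝ)) ^ N)⁻¹ * 1 := by gcongr
        _ = (((p : ℝ)) ^ N)⁻¹ := mul_one _
    refine ⟨?_, hb⟩
    have hbϑ : ‖b * (ϑ : ℚ_[p])‖ ≤ 1 := by
      rw [norm_mul]
      calc ‖b‖ * ‖(ϑ : ℚ_[p])‖ ≤ 1 * 1 :=
        mul_le_mul (hb.trans hpN1) (PadicInt.norm_le_one ϑ) (norm_nonneg _) zero_le_one
        _ = 1 := one_mul 1
    calc ‖a‖ = ‖(a + b * (ϑ : ℚ_[p])) + (-(b * ϑ))‖ := by congr 1; ring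
      _ ≤ max ‖a + b * (ϑ : ℚ_[p])‖ ‖-(b * (ϑ : ℚ_[p]))‖ := Padic.nonarchimedean _ _
      _ ≤ 1 := by rw [norm_neg]; exact max_le h00 hbϑ
  · rintro ⟨ha, hb⟩
    have hb1 : ‖b‖ ≤ 1 := hb.trans hpN1
    have hmul : ∀ x : ℤ_[p], ‖b * (x : ℚ_[p])‖ ≤ 1 := fun x => by
      rw [norm_mul]
      calc ‖b‖ * ‖(x : ℚ_[p])‖ ≤ 1 * 1 :=
        mul_le_mul hb1 (PadicInt.norm_le_one x) (norm_nonneg _) zero_le_one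
        _ = 1 := one_mul 1
    have h00 : ‖a + b * (ϑ : ℚ_[p])‖ ≤ 1 :=
      (Padic.nonarchimedean _ _).trans (max_le ha (hmul ϑ))
    have h11 : ‖a + b * (ϑbar : ℚ_[p])‖ ≤ 1 :=
      (Padic.nonarchimedean _ _).trans (max_le ha (hmul ϑbar))
    have h01 : ‖-((((p : ℚ_[p])) ^ N)⁻¹ * b)‖ ≤ 1 := by
      rw [norm_neg, norm_mul, norm_inv, hnorm, inv_inv]
      calc ((p : ℝ)) ^ N * ‖b‖ ≤ ((p : ℝ)) ^ N * (((p : ℝ)) ^ N)⁻¹ := by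
            gcongr
            rwa [hnorm] at hb
        _ = 1 := mul_inv_cancel₀ (ne_of_gt hppos)
    intro i j
    fin_cases i <;> fin_cases j
    · simpa [hD] using h00
    · simpa [hD] using h01
    · simp [hD]
    · simpa [hD] using h11
end
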